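/- arXiv:2006.05239 — 3 statements merged into one kernel-verified Lean document; each statement's English description precedes it below -/
import Mathlib

section
/- Suppose a = (a_1,...,a_m) with m ≥ 2 is sorted in nonincreasing order (a_1 ≥ a_2 ≥ ... ≥ a_m) and k > 0. Then the softmax-weighted smooth maximum satisfies the error bound a_1 - max~(a) ≤ (a_1 - a_m) / (exp(k(a_1 - a_2))/(m-1) + 1). -/
open Finset

theorem softmax_smooth_max_error_bound (m : ℕ) (hm : 2 ≤ m) (a : Fin m → ℝ)
    (ha : Antitone a) (k : ℝ) (hk : 0 < k) :
    a ⟨0, by omega⟩ - (∑ i, a i * Real.exp (k * a i)) / (∑ i, Real.exp (k * a i)) ≤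
      (a ⟨0, by omega⟩ - a ⟨m - 1, by omega⟩) /
        (Real.exp (k * (a ⟨0, by omega⟩ - a ⟨1, by omega⟩)) / (m - 1) + 1) := by
  set a0 : ℝ := a ⟨0, by omega⟩ with ha0def
  set a1 : ℝ := a ⟨1, by omega⟩ with ha1def
  set am : ℝ := a ⟨m - 1, by omega⟩ with hamdef
  set S : ℝ := ∑ i, Real.exp (k * a i) with hSdef
  set N : ℝ := ∑ i, a i * Real.exp (k * a i) with hNdef
  set E : ℝ := Real.exp (k * (a0 - a1)) with hEdef
  set c : ℝ := (m : ℝ) - 1 with hcdef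
  set D : ℝ := E / c + 1 with hDdef
  set z : Fin m := ⟨0, by omega⟩ with hzdef
  set T : ℝ := ∑ i ∈ Finset.univ \ {z}, Real.exp (k * a i) with hTdef
  have hc1 : (1 : ℝ) ≤ c := by
    rw [hcdef]
    have : (2 : ℝ) ≤ (m : ℝ) := by exact_mod_cast hm
    linarith
  have hc0 : (0 : ℝ) < c := by linarith
  have hD0 : (0 : ℝ) < D := by
    rw [hDdef]
    positivity
  have hSsplit : S = T + Real.exp (k * a0) := by
    rw [hSdef, hTdef, ← Finset.sum_eq_sum_sdiff_singleton_add (Finset.mem_univ z)]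
  have hS0 : (0 : ℝ) < S := by
    rw [hSsplit]
    have : (0:ℝ) ≤ T := Finset.sum_nonneg fun i _ => (Real.exp_pos _).le
    have := Real.exp_pos (k * a0)
    linarith
  have ha0i : ∀ i : Fin m, a i ≤ a0 := fun i => ha (by simp [hzdef, Fin.le_def])
  have hami : ∀ i : Fin m, am ≤ a i := fun i => ha (by
    have := i.isLt
    simp [Fin.le_def]; omega)
  have h0m : (0:ℝ) ≤ a0 - am := by have := hami ⟨0, by omega⟩; linarith
  have ha1i : ∀ i ∈ Finset.univ \ {z}, a i ≤ a1 := by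
    intro i hi
    apply ha
    simp only [Finset.mem_sdiff, Finset.mem_singleton] at hi
    have : i.val ≠ 0 := fun h => hi.2 (Fin.ext h)
    simp [Fin.le_def]; omega
  -- T bound
  have hTle : T ≤ c * Real.exp (k * a1) := by
    calc T ≤ ∑ _i ∈ Finset.univ \ {z}, Real.exp (k * a1) :=
          Finset.sum_le_sum fun i hi => Real.exp_le_exp.mpr
            (mul_le_mul_of_nonneg_left (ha1i i hi) hk.le)
      _ = c * Real.exp (k * a1) := by
          rw [Finset.sum_const, nsmul_eq_mul]
          congr 1
          rw [Finset.card_sdiff_of_subset (by simp), Finset.card_singleton, Finset.card_univ,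
            Fintype.card_fin, hcdef]
          have : 1 ≤ m := by omega
          push_cast [Nat.cast_sub this]
          ring
  have hEe : Real.exp (k * a1) * E = Real.exp (k * a0) := by
    rw [hEdef, ← Real.exp_add]; ring_nf
  have hnum : a0 * S - N = ∑ i, (a0 - a i) * Real.exp (k * a i) := by
    rw [hSdef, hNdef, Finset.mul_sum, ← Finset.sum_sub_distrib]
    exact Finset.sum_congr rfl fun i _ => by ring
  have hnumle : a0 * S - N ≤ (a0 - am) * T := by
    rw [hnum, Finset.sum_eq_sum_sdiff_singleton_add (Finset.mem_univ z)
      (fun i => (a0 - a i) * Real.exp (k * a i))]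
    have hz0 : a z = a0 := rfl
    rw [hz0]
    simp only [sub_self, zero_mul, add_zero]
    rw [hTdef, Finset.mul_sum]
    refine Finset.sum_le_sum fun i hi => ?_
    exact mul_le_mul_of_nonneg_right (by have := hami i; linarith)
      (Real.exp_pos (k * a i)).le
  -- key: T * D ≤ S
  have hkey : T * D ≤ S := by
    rw [hDdef, hSsplit]
    have hE0 : 0 < E := Real.exp_pos _
    have : T * (E / c) ≤ Real.exp (k * a0) := by
      rw [← hEe, show T * (E / c) = T * E / c by ring, div_le_iff₀ hc0]
      nlinarith
    nlinarith [this]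
  have hrw : a0 - N / S = (a0 * S - N) / S := by
    rw [sub_div, mul_div_assoc, div_self hS0.ne', mul_one]
  rw [hrw, div_le_div_iff₀ hS0 hD0]
  calc (a0 * S - N) * D ≤ ((a0 - am) * T) * D :=
        mul_le_mul_of_nonneg_right hnumle hD0.le
    _ = (a0 - am) * (T * D) := by ring
    _ ≤ (a0 - am) * S := mul_le_mul_of_nonneg_left hkey h0m
end

section
/- For two arguments, the smooth disjunction is sound with respect to disjunction: if max~(a,b) = (a exp(k a) + b exp(k b))/(exp(k a) + exp(k b)) > 0, then a > 0 or b > 0. -/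
theorem smooth_disjunction_sound (k : ℝ) (hk : 0 < k) (a b : ℝ)
    (h : 0 < (a * Real.exp (k * a) + b * Real.exp (k * b)) /
      (Real.exp (k * a) + Real.exp (k * b))) :
    0 < a ∨ 0 < b := by
  by_contra hc
  push_neg at hc
  obtain ⟨ha, hb⟩ := hc
  have hnum : a * Real.exp (k * a) + b * Real.exp (k * b) ≤ 0 := by
    have := mul_nonpos_of_nonpos_of_nonneg ha (Real.exp_pos (k * a)).le
    have := mul_nonpos_of_nonpos_of_nonneg hb (Real.exp_pos (k * b)).le
    linarith
  have hden : 0 < Real.exp (k * a) + Real.exp (k * b) := by positivity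
  have := div_nonpos_of_nonpos_of_nonneg hnum hden.le
  linarith
end

section
/- Soundness of the smooth robustness for the 'always' operator: for a finite signal ρ : Fin m → ℝ, if the smooth minimum -(1/k) log(Σ_t exp(-k ρ_t)) is positive, then ρ_t > 0 for every t. -/
theorem smooth_always_sound (m : ℕ) (hm : 1 ≤ m) (k : ℝ) (hk : 0 < k) (ρ : Fin m → ℝ)
    (h : 0 < -(1/k) * Real.log (∑ t, Real.exp (-k * ρ t))) :
    ∀ t, 0 < ρ t := by
  intro t
  have hlog : Real.log (∑ t, Real.exp (-k * ρ t)) < 0 := by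
    by_contra hc
    push_neg at hc
    nlinarith [one_div_pos.mpr hk]
  have hS : (∑ t, Real.exp (-k * ρ t)) < 1 := by
    have := Real.exp_lt_one_iff.mpr hlog
    rwa [Real.exp_log (Finset.sum_pos (fun i _ => Real.exp_pos _) ⟨t, Finset.mem_univ t⟩)] at this
  have hle : Real.exp (-k * ρ t) ≤ ∑ t, Real.exp (-k * ρ t) :=
    Finset.single_le_sum (fun i _ => (Real.exp_pos (-k * ρ i)).le) (Finset.mem_univ t)
  have := Real.exp_lt_one_iff.mp (lt_of_le_of_lt hle hS)
  nlinarith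
end
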